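/- Let Σ ⊆ ℝⁿ be nonempty and compact, x ∈ ℝⁿ, and ξ : ℝⁿ → ℝⁿ a Lipschitz map with Lipschitz constant L such that L · dist(x, Σ) < dist(x, Σ). Then there exists c > 0 and t₀ > 0 such that for all |t| ≤ t₀, |dist((id+tξ)(x), (id+tξ)(Σ))² - dist(x, Σ)²| ≤ c · dist(x, Σ)² · |t|. -/
import Mathlib


open Metric

theorem stmt_8 (n : ℕ)
    (S : Set (EuclideanSpace ℝ (Fin n))) (hS : S.Nonempty) (hSc : IsCompact S)
    (x : EuclideanSpace ℝ (Fin n))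
    (L : NNReal) (ξ : EuclideanSpace ℝ (Fin n) → EuclideanSpace ℝ (Fin n))
    (hξ : LipschitzWith L ξ)
    (hL : (L : ℝ) * infDist x S < infDist x S) :
    ∃ c > 0, ∃ t₀ > 0, ∀ t : ℝ, |t| ≤ t₀ →
      |(infDist (x + t • ξ x) ((fun y => y + t • ξ y) '' S)) ^ 2 - (infDist x S) ^ 2| ≤
        c * (infDist x S) ^ 2 * |t| := by
  set d := infDist x S with hd
  have hLnn : (0:ℝ) ≤ L := L.coe_nonneg
  have hd0 : 0 < d := by
    rcases lt_or_ge 0 d with h | h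
    · exact h
    · have : d = 0 := le_antisymm h infDist_nonneg
      rw [this] at hL; simp at hL
  refine ⟨3 * ((L:ℝ) + 1), by positivity, 1 / ((L:ℝ) + 1), by positivity, ?_⟩
  intro t ht
  set a := |t| * (L:ℝ) with ha
  have ha0 : 0 ≤ a := by positivity
  have ha1 : a ≤ 1 := by
    calc |t| * (L:ℝ) ≤ (1 / ((L:ℝ) + 1)) * (L:ℝ) := by gcongr
    _ ≤ 1 := by
      rw [div_mul_eq_mul_div, one_mul, div_le_one (by positivity)]
      linarith
  -- basic distance estimate
  have key : ∀ y : EuclideanSpace ℝ (Fin n),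
      dist (t • ξ x) (t • ξ y) ≤ a * dist x y := by
    intro y
    rw [dist_smul₀]
    calc |t| * dist (ξ x) (ξ y) ≤ |t| * ((L:ℝ) * dist x y) := by
          gcongr
          exact hξ.dist_le_mul x y
    _ = a * dist x y := by ring
  set D := infDist (x + t • ξ x) ((fun y => y + t • ξ y) '' S) with hD
  have hDnn : 0 ≤ D := infDist_nonneg
  -- upper bound
  obtain ⟨y, hyS, hdy⟩ := hSc.exists_infDist_eq_dist hS x
  have hup : D ≤ (1 + a) * d := by
    have h1 : D ≤ dist (x + t • ξ x) (y + t • ξ y) :=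
      infDist_le_dist_of_mem ⟨y, hyS, rfl⟩
    have h2 : dist (x + t • ξ x) (y + t • ξ y) ≤ dist x y + a * dist x y :=
      le_trans (dist_add_add_le x (t • ξ x) y (t • ξ y)) (by linarith [key y])
    rw [← hdy] at h2
    linarith
  -- lower bound
  have hcont : Continuous (fun y : EuclideanSpace ℝ (Fin n) => y + t • ξ y) :=
    continuous_id.add (hξ.continuous.const_smul t)
  obtain ⟨z, hz, hz'⟩ := (hSc.image hcont).exists_infDist_eq_dist (hS.image _)
    (x + t • ξ x)
  obtain ⟨w, hwS, rfl⟩ := hz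
  have hlow : (1 - a) * d ≤ D := by
    have h1 : dist x w ≤ dist (x + t • ξ x) (w + t • ξ w) + a * dist x w := by
      have := dist_add_add_le (x + t • ξ x) (-(t • ξ x)) (w + t • ξ w) (-(t • ξ w))
      simp only [add_neg_cancel_right, dist_neg_neg] at this
      linarith [key w]
    have h2 : d ≤ dist x w := infDist_le_dist_of_mem hwS
    have h3 : D = dist (x + t • ξ x) (w + t • ξ w) := hz'
    nlinarith
  rw [abs_le]
  have hta : 3 * a ≤ 3 * ((L:ℝ) + 1) * |t| := by
    rw [ha]
    nlinarith [abs_nonneg t]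
  have hlow0 : 0 ≤ (1 - a) * d := mul_nonneg (by linarith) hd0.le
  have hsq1 : D * D ≤ ((1 + a) * d) * ((1 + a) * d) :=
    mul_le_mul hup hup hDnn (by positivity)
  have hsq2 : ((1 - a) * d) * ((1 - a) * d) ≤ D * D :=
    mul_le_mul hlow hlow hlow0 hDnn
  have htad : (3 * a) * d ^ 2 ≤ (3 * ((L:ℝ) + 1) * |t|) * d ^ 2 :=
    mul_le_mul_of_nonneg_right hta (sq_nonneg d)
  constructor <;> nlinarith [sq_nonneg d, mul_nonneg (mul_nonneg ha0 ha0) (sq_nonneg d)]
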